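/- Let X be an arbitrary set, let (x_n)_{n≥0} be a sequence of mutually distinct points of X, and let (a_n)_{n≥0} be real numbers with ∑_{n=0}^∞ |a_n| < ∞ and ∑_{n=0}^∞ a_n = 1. For a bounded function f : X → ℝ write f_n := f(x_n) and L(f) := ∑_{n=0}^∞ a_n f_n. Then for all bounded functions f, g : X → ℝ one has |L(f·g) − L(f)·L(g)| ≤ osc_L(f) · osc_L(g) · ∑_{0 ≤ n < m < ∞} |a_n a_m|, where osc_L(f) := sup{|f_n − f_m| : 0 ≤ n < m < ∞} and similarly for g. -/

import Mathlib

/-!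
Expanding the product shows that the symmetric kernel `a i * a j * (F i - F j) * (G i - G j)`
sums over all pairs `(i, j)` to `2 * (L(1) L(FG) - L(F) L(G))`. The kernel vanishes on the
diagonal, so this is twice its sum over the pairs `i < j`, where each term is bounded by
`osc F * osc G * |a i * a j|`.
-/

theorem tsum_eq_two_nsmul_tsum_lt {ι E : Type*} [LinearOrder ι] [NormedAddCommGroup E]
    [CompleteSpace E] {h : ι × ι → E} (hs : Summable h)
    (hsymm : ∀ i j, h (i, j) = h (j, i)) (hdiag : ∀ i, h (i, i) = 0) :
    ∑' p, h p = 2 • ∑' p : {q : ι × ι // q.1 < q.2}, h p := by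
  set S : Set (ι × ι) := {q | q.1 < q.2}
  have hsplit : ∀ p, h p = S.indicator h p + S.indicator h p.swap := by
    rintro ⟨i, j⟩
    rcases lt_trichotomy i j with hij | rfl | hij
    · simp [S, hij, hij.not_gt]
    · simp [S, hdiag]
    · simp [S, hij, hij.not_gt, hsymm i j]
  have hS := hs.indicator S
  have hS_swap : Summable fun p : ι × ι => S.indicator h p.swap := hS.prod_symm
  have htsum_swap : ∑' p : ι × ι, S.indicator h p.swap = ∑' p, S.indicator h p := by
    simpa only [Equiv.prodComm_apply] using (Equiv.prodComm ι ι).tsum_eq (S.indicator h)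
  calc ∑' p, h p = ∑' p, S.indicator h p + ∑' p : ι × ι, S.indicator h p.swap := by
        rw [← hS.tsum_add hS_swap]
        exact tsum_congr hsplit
    _ = 2 • ∑' p : S, h p := by rw [htsum_swap, tsum_subtype, two_nsmul]

theorem hasSum_mul_of_summable_norm {ι ι' R : Type*} [NormedRing R] [CompleteSpace R]
    {u : ι → R} {v : ι' → R} (hu : Summable fun i => ‖u i‖) (hv : Summable fun j => ‖v j‖) :
    HasSum (fun p : ι × ι' => u p.1 * v p.2) ((∑' i, u i) * ∑' j, v j) := by
  rw [tsum_mul_tsum_of_summable_norm hu hv]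
  exact (summable_mul_of_summable_norm hu hv).hasSum

section Chebyshev

variable {ι : Type*} {a F G : ι → ℝ} {C CF CG : ℝ}

theorem summable_norm_mul_of_abs_le (ha : Summable fun i => |a i|) (hF : ∀ i, |F i| ≤ C) :
    Summable fun i => ‖a i * F i‖ :=
  (ha.mul_left C).of_nonneg_of_le (fun _ => norm_nonneg _) fun i => by
    rw [Real.norm_eq_abs, abs_mul, mul_comm]
    exact mul_le_mul_of_nonneg_right (hF i) (abs_nonneg _)

theorem hasSum_mul_mul_sub_mul_sub (ha : Summable fun i => |a i|) (hF : ∀ i, |F i| ≤ CF)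
    (hG : ∀ i, |G i| ≤ CG) :
    HasSum (fun p : ι × ι => a p.1 * a p.2 * ((F p.1 - F p.2) * (G p.1 - G p.2)))
      (2 * ((∑' i, a i) * (∑' i, a i * (F i * G i)) - (∑' i, a i * F i) * ∑' i, a i * G i)) := by
  have hA : Summable fun i => ‖a i‖ := by simpa only [Real.norm_eq_abs] using ha
  have hAF := summable_norm_mul_of_abs_le ha hF
  have hAG := summable_norm_mul_of_abs_le ha hG
  have hAFG := summable_norm_mul_of_abs_le ha (C := CF * CG) fun i => by
    rw [abs_mul]
    exact mul_le_mul (hF i) (hG i) (abs_nonneg _) ((abs_nonneg _).trans (hF i))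
  convert! (((hasSum_mul_of_summable_norm hAFG hA).add (hasSum_mul_of_summable_norm hA hAFG)).sub
    (hasSum_mul_of_summable_norm hAF hAG)).sub (hasSum_mul_of_summable_norm hAG hAF) using 1
  · funext p; ring
  · ring

variable [LinearOrder ι]

noncomputable def osc (F : ι → ℝ) : ℝ := sSup {d : ℝ | ∃ n m : ι, n < m ∧ d = |F n - F m|}

theorem abs_sub_le_osc (hF : ∀ i, |F i| ≤ C) {n m : ι} (h : n < m) : |F n - F m| ≤ osc F :=
  le_csSup ⟨2 * C, by rintro d ⟨n, m, -, rfl⟩; exact (abs_sub _ _).trans (by linarith [hF n, hF m])⟩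
    ⟨n, m, h, rfl⟩

theorem abs_tsum_mul_sub_le_osc_mul_osc (ha : Summable fun i => |a i|) (hF : ∀ i, |F i| ≤ CF)
    (hG : ∀ i, |G i| ≤ CG) :
    |(∑' i, a i) * (∑' i, a i * (F i * G i)) - (∑' i, a i * F i) * ∑' i, a i * G i| ≤
      osc F * osc G * ∑' p : {q : ι × ι // q.1 < q.2}, |a p.1.1 * a p.1.2| := by
  have hK := hasSum_mul_mul_sub_mul_sub ha hF hG
  have hpairs := tsum_eq_two_nsmul_tsum_lt hK.summable (fun i j => by ring) (fun i => by simp)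
  rw [hK.tsum_eq, two_nsmul, ← two_mul, mul_right_inj' two_ne_zero] at hpairs
  have hA : Summable fun i => ‖a i‖ := by simpa only [Real.norm_eq_abs] using ha
  have hsum : Summable fun p : ι × ι => |a p.1 * a p.2| := by
    simpa only [Real.norm_eq_abs] using hA.mul_norm hA
  rw [hpairs, ← tsum_mul_left, ← Real.norm_eq_abs]
  refine tsum_of_norm_bounded ((hsum.subtype _).mul_left _).hasSum fun p => ?_
  have hFp := abs_sub_le_osc hF p.2
  have hGp := abs_sub_le_osc hG p.2
  rw [Function.comp_apply, Real.norm_eq_abs, abs_mul (a _ * a _), abs_mul (F _ - F _), mul_comm]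
  exact mul_le_mul_of_nonneg_right (mul_le_mul hFp hGp (abs_nonneg _) ((abs_nonneg _).trans hFp))
    (abs_nonneg _)

end Chebyshev

theorem discrete_chebyshev_gruss {X : Type*} (x : ℕ → X)
    (a : ℕ → ℝ) (ha : Summable fun n => |a n|) (ha1 : (∑' n, a n) = 1)
    (f g : X → ℝ) (hf : ∃ C, ∀ y, |f y| ≤ C) (hg : ∃ C, ∀ y, |g y| ≤ C) :
    |(∑' n, a n * (f (x n) * g (x n))) -
        (∑' n, a n * f (x n)) * (∑' n, a n * g (x n))| ≤
      sSup {d : ℝ | ∃ n m : ℕ, n < m ∧ d = |f (x n) - f (x m)|} *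
        sSup {d : ℝ | ∃ n m : ℕ, n < m ∧ d = |g (x n) - g (x m)|} *
        ∑' p : {q : ℕ × ℕ // q.1 < q.2}, |a p.1.1 * a p.1.2| := by
  obtain ⟨CF, hCF⟩ := hf
  obtain ⟨CG, hCG⟩ := hg
  have h := abs_tsum_mul_sub_le_osc_mul_osc (F := fun n => f (x n)) (G := fun n => g (x n)) ha
    (fun n => hCF (x n)) (fun n => hCG (x n))
  rwa [ha1, one_mul] at h
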